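/- Let S = ⊕_{i∈ℤ} S_i be an epsilon-strongly ℤ-graded ring with principal component R = S_0. If R is left noetherian, then S is left noetherian. -/

import Mathlib

open Pointwise

/-- `A` is a `ℤ`-grading of the ring `S`: `S` is the internal direct sum of the
additive subgroups `A i`, and `A i * A j ⊆ A (i + j)` for all `i j : ℤ`. -/
def IsZGrading {S : Type*} [Ring S] (A : ℤ → AddSubgroup S) : Prop :=
  DirectSum.IsInternal A ∧ ∀ i j : ℤ, ∀ x ∈ A i, ∀ y ∈ A j, x * y ∈ A (i + j)

/-- The `ℤ`-grading `A` is epsilon-strong: it is symmetric (`A i * A (-i) * A i = A i`)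
and for every `i` there is `ε i ∈ A i * A (-i)` acting as a left identity on `A i`, with
`ε (-i)` acting as a right identity on `A i`.  Here `P * Q` denotes the additive subgroup
generated by products of elements of `P` and `Q`. -/
def IsEpsilonStrongZ {S : Type*} [Ring S] (A : ℤ → AddSubgroup S) : Prop :=
  (∀ i : ℤ, A i * A (-i) * A i = A i) ∧
  ∃ ε : ℤ → S, ∀ i : ℤ, ε i ∈ A i * A (-i) ∧ ∀ x ∈ A i, ε i * x = x ∧ x * ε (-i) = x

/-! The argument is Hilbert's basis theorem, run once from above and once from below.
If `x ∈ I` has top component `xₙ`, then `xₙ = εₙ xₙ` with `εₙ ∈ Sₙ S₋ₙ`, so `xₙ` is a sum of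
terms `u (v xₙ)` with `u ∈ Sₙ` and `v xₙ ∈ S₀ = R`. The `R`-module spanned by all such `v xₙ`
is finitely generated because `R` is noetherian; lifting its generators to `I` gives a finitely
generated `J ≤ I` whose elements live in degrees `[-D, 0]`, and subtracting elements of `J`
pushes the support of `x` down to degrees `≤ 0`. Doing the same for the grading `k ↦ S₋ₖ` pushes
it up to degrees in `[0, D']`. Finally `I ∩ (S₀ ⊕ ⋯ ⊕ S_D')` is finitely generated over `R`,
since each `Sᵢ` is (`ε₋ᵢ` is a right identity on `Sᵢ`), and together with the two `J`s it
generates `I`. -/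

open DirectSum Set

theorem AddSubgroup.mul_le {R : Type*} [NonUnitalNonAssocRing R] {M N P : AddSubgroup R} :
    M * N ≤ P ↔ ∀ m ∈ M, ∀ n ∈ N, m * n ∈ P := by
  rw [← AddSubgroup.toAddSubmonoid_le, AddSubgroup.mul_toAddSubmonoid, AddSubmonoid.mul_le]
  rfl

theorem DirectSum.coeAddMonoidHom_comapDomain' {ι κ M σ : Type*} [DecidableEq ι] [DecidableEq κ]
    [AddCommMonoid M] [SetLike σ M] [AddSubmonoidClass σ M] (A : ι → σ) (e : κ ≃ ι)
    (d : ⨁ i, A i) :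
    DirectSum.coeAddMonoidHom (fun k => A (e k))
      (DFinsupp.comapDomain' e (h' := e.symm) e.symm_apply_apply d) =
    DirectSum.coeAddMonoidHom A d := by
  induction d using DirectSum.induction_on with
  | zero => simp
  | of i x =>
    obtain ⟨k, rfl⟩ := e.surjective i
    erw [DFinsupp.comapDomain'_single]
    rw [DirectSum.coeAddMonoidHom_of]
    exact DirectSum.coeAddMonoidHom_of _ _ _
  | add d d' hd hd' => rw [DFinsupp.comapDomain'_add, map_add, map_add, hd, hd']

namespace GradedRing

section Reindex

variable {ι κ S : Type*} [DecidableEq ι] [DecidableEq κ] [AddCommMonoid ι] [AddCommMonoid κ]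
  [Ring S] (A : ι → AddSubgroup S) (e : κ ≃+ ι)

@[reducible] def reindex [GradedRing A] : GradedRing fun k => A (e k) where
  one_mem := by simpa using SetLike.GradedOne.one_mem (A := A)
  mul_mem i j x y hx hy := by simpa using SetLike.GradedMul.mul_mem hx hy
  decompose' x := DFinsupp.comapDomain' e (h' := e.symm) e.symm_apply_apply (decompose A x)
  left_inv x :=
    (coeAddMonoidHom_comapDomain' A e.toEquiv (decompose A x)).trans
      ((decompose A).symm_apply_apply x)
  right_inv d := by
    induction d using DirectSum.induction_on with
    | zero => simp
    | of k x =>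
      simp only [DirectSum.coeAddMonoidHom_of]
      rw [decompose_coe]
      exact DFinsupp.comapDomain'_single _ _ _ _
    | add d d' hd hd' =>
      dsimp only at hd hd' ⊢
      rw [map_add, decompose_add, DFinsupp.comapDomain'_add, hd, hd']

theorem proj_reindex [GradedRing A] (k : κ) (x : S) :
    let _ := reindex A e
    proj (fun k => A (e k)) k x = proj A (e k) x := rfl

theorem gradeZero_subring_reindex [GradedRing A] :
    let _ := reindex A e
    SetLike.GradeZero.subring (fun k => A (e k)) = SetLike.GradeZero.subring A := by
  ext x
  change x ∈ A (e 0) ↔ x ∈ A 0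
  rw [map_zero]

end Reindex

variable {S : Type*} [Ring S] (A : ℤ → AddSubgroup S) [GradedRing A]

local notation "R₀" => SetLike.GradeZero.subring A

theorem proj_mem (i : ℤ) (x : S) : proj A i x ∈ A i := (decompose A x i).2

theorem proj_mul_of_mem {d : ℤ} {c : S} (hc : c ∈ A d) (i : ℤ) (x : S) :
    proj A (d + i) (c * x) = c * proj A i x :=
  coe_decompose_mul_add_of_left_mem A hc

theorem proj_smul (r : R₀) (i : ℤ) (x : S) : proj A i (r • x) = r • proj A i x := by
  have h := proj_mul_of_mem A r.2 i x
  rwa [zero_add] at h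

def projₗ (i : ℤ) : S →ₗ[R₀] S where
  toFun := proj A i
  map_add' := map_add _
  map_smul' r x := proj_smul A r i x

def gradeSubmodule (i : ℤ) : Submodule R₀ S where
  carrier := A i
  add_mem' := add_mem
  zero_mem' := zero_mem _
  smul_mem' r x hx := by
    have h := SetLike.GradedMul.mul_mem r.2 hx
    rwa [zero_add] at h

theorem mem_gradeSubmodule {i : ℤ} {x : S} : x ∈ gradeSubmodule A i ↔ x ∈ A i := Iff.rfl

def supportedIn (s : Set ℤ) : Submodule R₀ S where
  carrier := {x | ∀ i ∉ s, proj A i x = 0}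
  add_mem' hx hy i hi := by rw [map_add, hx i hi, hy i hi, add_zero]
  zero_mem' i _ := map_zero _
  smul_mem' r x hx i hi := by rw [proj_smul, hx i hi, smul_zero]

variable {A}

theorem supportedIn_mono {s t : Set ℤ} (hst : s ⊆ t) : supportedIn A s ≤ supportedIn A t :=
  fun _ hx i hi => hx i fun his => hi (hst his)

theorem mem_supportedIn_inter {s t : Set ℤ} {x : S} (hs : x ∈ supportedIn A s)
    (ht : x ∈ supportedIn A t) : x ∈ supportedIn A (s ∩ t) := fun i hi => by
  by_cases h : i ∈ s
  exacts [ht i fun h' => hi ⟨h, h'⟩, hs i h]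

theorem mul_mem_supportedIn_Icc {d a b : ℤ} {c x : S} (hc : c ∈ A d)
    (hx : x ∈ supportedIn A (Icc a b)) : c * x ∈ supportedIn A (Icc (d + a) (d + b)) := by
  intro i hi
  rw [← add_sub_cancel d i, proj_mul_of_mem A hc, hx, mul_zero]
  simp only [mem_Icc] at hi ⊢
  omega

variable (A)

theorem exists_mem_supportedIn_Icc (x : S) : ∃ a b, x ∈ supportedIn A (Icc a b) := by
  classical
  obtain ⟨a, ha⟩ := (decompose A x).support.bddBelow
  obtain ⟨b, hb⟩ := (decompose A x).support.bddAbove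
  refine ⟨a, b, fun i hi => not_not.1 fun h => hi ?_⟩
  have hi' := (mem_support_iff A x i).2 h
  exact ⟨ha hi', hb hi'⟩

theorem exists_forall_mem_supportedIn_Ici (G : Finset S) :
    ∃ a, ∀ x ∈ G, x ∈ supportedIn A (Ici a) := by
  induction G using Finset.cons_induction with
  | empty => exact ⟨0, by simp⟩
  | cons x G _ ih =>
    obtain ⟨a, ha⟩ := ih
    obtain ⟨b, _, hb⟩ := exists_mem_supportedIn_Icc A x
    refine ⟨min a b, (Finset.forall_mem_cons _ _).2 ⟨?_, fun y hy => ?_⟩⟩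
    · exact supportedIn_mono (fun i hi => le_trans (min_le_right a b) hi.1) hb
    · exact supportedIn_mono (Ici_subset_Ici.2 (min_le_left a b)) (ha y hy)

theorem supportedIn_Icc_le_iSup (a b : ℤ) :
    supportedIn A (Icc a b) ≤ ⨆ i ∈ Finset.Icc a b, gradeSubmodule A i := by
  classical
  intro x hx
  rw [← sum_support_decompose A x]
  refine Submodule.sum_mem _ fun i hi => ?_
  have hab : i ∈ Finset.Icc a b := by
    by_contra h
    exact (mem_support_iff A x i).1 hi (hx i (by simpa using h))
  exact Submodule.mem_iSup_of_mem i (Submodule.mem_iSup_of_mem hab (decompose A x i).2)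

theorem fg_gradeSubmodule_zero : (gradeSubmodule A 0).FG := by
  refine ⟨{1}, le_antisymm (Submodule.span_le.2 ?_) fun x hx => ?_⟩
  · simpa [mem_gradeSubmodule] using SetLike.GradedOne.one_mem (A := A)
  · simpa [Subring.smul_def] using
      Submodule.smul_mem _ (⟨x, hx⟩ : R₀) (Submodule.mem_span_singleton_self (1 : S))

variable {A} in
theorem fg_gradeSubmodule {i : ℤ} {ε : S} (hε : ε ∈ A (-i) * A i) (hεx : ∀ x ∈ A i, x * ε = x) :
    (gradeSubmodule A i).FG := by
  classical
  rw [← AddSubgroup.mem_toAddSubmonoid, AddSubgroup.mul_toAddSubmonoid] at hε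
  suffices ∃ T : Finset S, ↑T ⊆ (A i : Set S) ∧ ∀ x ∈ A i, x * ε ∈ Submodule.span R₀ T by
    obtain ⟨T, hTA, hT⟩ := this
    refine ⟨T, le_antisymm (Submodule.span_le.2 hTA) fun x hx => ?_⟩
    simpa [hεx x hx] using hT x hx
  refine AddSubmonoid.mul_induction_on hε (fun u hu v hv => ⟨{v}, by simpa using hv, ?_⟩) ?_
  · intro x hx
    have hxu : x * u ∈ A 0 := by simpa using SetLike.GradedMul.mul_mem hx hu
    simpa [Subring.smul_def, mul_assoc] using
      Submodule.smul_mem _ (⟨x * u, hxu⟩ : R₀) (Submodule.mem_span_singleton_self v)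
  · rintro _ _ ⟨T, hTA, hT⟩ ⟨T', hTA', hT'⟩
    refine ⟨T ∪ T', by simpa using And.intro hTA hTA', fun x hx => ?_⟩
    rw [mul_add]
    exact Submodule.add_mem _ (Submodule.span_mono (by simp) (hT x hx))
      (Submodule.span_mono (by simp) (hT' x hx))

theorem fg_supportedIn_Icc [IsNoetherianRing R₀] (hfg : ∀ i, (gradeSubmodule A i).FG) (a b : ℤ) :
    (supportedIn A (Icc a b)).FG :=
  (Submodule.fg_biSup _ _ fun i _ => hfg i).of_le (supportedIn_Icc_le_iSup A a b)

def leadingCoeffSpan (I : Submodule S S) : Submodule R₀ S :=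
  Submodule.span R₀ {w | ∃ n a x, a ∈ A (-n) ∧ x ∈ I ∧ x ∈ supportedIn A (Iic n) ∧
    w = a * proj A n x}

theorem leadingCoeffSpan_le_gradeSubmodule_zero (I : Submodule S S) :
    leadingCoeffSpan A I ≤ gradeSubmodule A 0 := by
  refine Submodule.span_le.2 ?_
  rintro _ ⟨n, a, x, ha, -, -, rfl⟩
  have h := SetLike.GradedMul.mul_mem ha (proj_mem A n x)
  rwa [neg_add_cancel] at h

theorem leadingCoeffSpan_le_map_proj (I : Submodule S S) :
    leadingCoeffSpan A I ≤ (I.restrictScalars R₀ ⊓ supportedIn A (Iic 0)).map (projₗ A 0) := by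
  refine Submodule.span_le.2 ?_
  rintro _ ⟨n, a, x, ha, hxI, hx, rfl⟩
  refine ⟨a * x, ⟨I.smul_mem a hxI, fun i hi => ?_⟩, ?_⟩
  · rw [← neg_add_cancel_left n i, proj_mul_of_mem A ha, hx, mul_zero]
    simp only [mem_Iic, not_le] at hi ⊢
    omega
  · have h := proj_mul_of_mem A ha n x
    rwa [neg_add_cancel] at h

theorem exists_fg_lift_leadingCoeffSpan [IsNoetherianRing R₀] (I : Submodule S S) :
    ∃ J : Submodule S S, J.FG ∧ J ≤ I ∧ ∃ D : ℤ,
      leadingCoeffSpan A I ≤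
        (J.restrictScalars R₀ ⊓ supportedIn A (Icc (-D) 0)).map (projₗ A 0) := by
  classical
  obtain ⟨T, hT⟩ :=
    (fg_gradeSubmodule_zero A).of_le (leadingCoeffSpan_le_gradeSubmodule_zero A I)
  have hlift : ∀ t ∈ T, ∃ z ∈ I, z ∈ supportedIn A (Iic 0) ∧ proj A 0 z = t := fun t ht => by
    obtain ⟨z, ⟨hzI, hz⟩, hzt⟩ :=
      leadingCoeffSpan_le_map_proj A I (hT ▸ Submodule.subset_span ht)
    exact ⟨z, hzI, hz, hzt⟩
  choose! z hzI hz hzt using hlift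
  obtain ⟨a, ha⟩ := exists_forall_mem_supportedIn_Ici A (T.image z)
  refine ⟨Submodule.span S (T.image z), Submodule.fg_span (Finset.finite_toSet _),
    Submodule.span_le.2 fun y hy => ?_, -a, ?_⟩
  · obtain ⟨t, ht, rfl⟩ := Finset.mem_image.1 hy
    exact hzI t ht
  rw [← hT, Submodule.span_le]
  intro t ht
  have hzT : z t ∈ T.image z := Finset.mem_image_of_mem z ht
  refine ⟨z t, ⟨Submodule.subset_span hzT, ?_⟩, hzt t ht⟩
  rw [neg_neg, ← Ici_inter_Iic]
  exact mem_supportedIn_inter (ha _ hzT) (hz t ht)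

variable {A}

theorem exists_proj_eq_of_le_map {I J : Submodule S S} {D : ℤ}
    (hJ : leadingCoeffSpan A I ≤
      (J.restrictScalars R₀ ⊓ supportedIn A (Icc (-D) 0)).map (projₗ A 0))
    {n : ℤ} {ε : S} (hε : ε ∈ A n * A (-n)) (hεx : ∀ x ∈ A n, ε * x = x)
    {x : S} (hxI : x ∈ I) (hx : x ∈ supportedIn A (Iic n)) :
    ∃ z ∈ J, z ∈ supportedIn A (Icc (n - D) n) ∧ proj A n z = proj A n x := by
  -- `xₙ = ε xₙ`, and each `u * v * xₙ` (`u ∈ A n`, `v ∈ A (-n)`) is `u` times the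
  -- degree-`0` component of an element of `J`.
  set M := ((J.restrictScalars R₀ ⊓ supportedIn A (Icc (n - D) n)).map (projₗ A n)).toAddSubgroup
  suffices A n * A (-n) ≤ M.comap (AddMonoidHom.mulRight (proj A n x)) by
    obtain ⟨z, ⟨hzJ, hz⟩, hzx⟩ := this hε
    exact ⟨z, hzJ, hz, hzx.trans (hεx _ (proj_mem A n x))⟩
  refine AddSubgroup.mul_le.2 fun u hu v hv => ?_
  obtain ⟨z, ⟨hzJ, hz⟩, hzv⟩ := hJ (Submodule.subset_span ⟨n, v, x, hv, hxI, hx, rfl⟩)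
  refine ⟨u * z, ⟨J.smul_mem u hzJ, ?_⟩, ?_⟩
  · simpa [← sub_eq_add_neg] using mul_mem_supportedIn_Icc hu hz
  · change proj A n (u * z) = u * v * proj A n x
    rw [← add_zero n, proj_mul_of_mem A hu, add_zero, mul_assoc]
    exact congrArg (u * ·) hzv

theorem exists_sub_mem_supportedIn_Icc {I J : Submodule S S} (hJI : J ≤ I) {D : ℤ}
    (hred : ∀ n : ℤ, ∀ x ∈ I, x ∈ supportedIn A (Iic n) →
      ∃ z ∈ J, z ∈ supportedIn A (Icc (n - D) n) ∧ proj A n z = proj A n x)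
    {a : ℤ} (ha : a ≤ -D) {b : ℤ} (hb : 0 ≤ b) :
    ∀ x ∈ I, x ∈ supportedIn A (Icc a b) → ∃ z ∈ J, x - z ∈ supportedIn A (Icc a 0) := by
  induction b, hb using Int.leInduction with
  | base => exact fun x _ hx => ⟨0, J.zero_mem, by rwa [sub_zero]⟩
  | succ b hb ih =>
    intro x hxI hx
    obtain ⟨z, hzJ, hz, hzx⟩ := hred (b + 1) x hxI (supportedIn_mono (fun i hi => hi.2) hx)
    have hy : x - z ∈ supportedIn A (Icc a b) := by
      intro i hi
      rw [map_sub]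
      by_cases hib : i = b + 1
      · rw [hib, hzx, sub_self]
      · rw [hx i (by simp only [mem_Icc] at hi ⊢; omega),
          hz i (by simp only [mem_Icc] at hi ⊢; omega), sub_zero]
    obtain ⟨z', hz'J, hz'⟩ := ih (x - z) (I.sub_mem hxI (hJI hzJ)) hy
    exact ⟨z + z', J.add_mem hzJ hz'J, by rwa [← sub_sub]⟩

variable (A)

theorem exists_fg_truncation_above [IsNoetherianRing R₀] {ε : ℤ → S}
    (hε : ∀ i, ε i ∈ A i * A (-i)) (hεx : ∀ i, ∀ x ∈ A i, ε i * x = x) (I : Submodule S S) :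
    ∃ J : Submodule S S, J.FG ∧ J ≤ I ∧ ∃ D : ℤ, ∀ a ≤ -D, ∀ x ∈ I,
      x ∈ supportedIn A (Ici a) → ∃ z ∈ J, x - z ∈ supportedIn A (Icc a 0) := by
  obtain ⟨J, hJ, hJI, D, hD⟩ := exists_fg_lift_leadingCoeffSpan A I
  refine ⟨J, hJ, hJI, D, fun a ha x hxI hx => ?_⟩
  obtain ⟨_, b, hb⟩ := exists_mem_supportedIn_Icc A x
  refine exists_sub_mem_supportedIn_Icc hJI
    (fun n y hyI hy => exists_proj_eq_of_le_map hD (hε n) (hεx n) hyI hy) ha (le_max_left 0 b) x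
    hxI (supportedIn_mono ?_ (mem_supportedIn_inter hx hb))
  exact fun i hi => ⟨hi.1, hi.2.2.trans (le_max_right 0 b)⟩

-- Truncation from below is truncation from above for the grading `k ↦ A (-k)`.
theorem exists_fg_truncation_below [IsNoetherianRing R₀] {ε : ℤ → S}
    (hε : ∀ i, ε i ∈ A i * A (-i)) (hεx : ∀ i, ∀ x ∈ A i, ε i * x = x) (I : Submodule S S) :
    ∃ J : Submodule S S, J.FG ∧ J ≤ I ∧ ∃ D : ℤ, ∀ x ∈ I,
      x ∈ supportedIn A (Iic 0) → ∃ z ∈ J, x - z ∈ supportedIn A (Icc 0 D) := by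
  let e := AddEquiv.neg ℤ
  let _ := reindex A e
  have : IsNoetherianRing (SetLike.GradeZero.subring fun k => A (e k)) :=
    (gradeZero_subring_reindex A e).symm ▸ ‹IsNoetherianRing R₀›
  obtain ⟨J, hJ, hJI, D, hD⟩ := exists_fg_truncation_above (fun k => A (e k))
    (ε := fun k => ε (-k)) (fun k => by simpa [e] using hε (-k)) (fun k => hεx (-k)) I
  refine ⟨J, hJ, hJI, -min 0 (-D), fun x hxI hx => ?_⟩
  obtain ⟨z, hzJ, hz⟩ := hD (min 0 (-D)) (min_le_right _ _) x hxI fun k hk => by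
    rw [proj_reindex]
    exact hx _ (by simp only [mem_Ici, mem_Iic, not_le, e, AddEquiv.neg_apply] at hk ⊢; omega)
  refine ⟨z, hzJ, fun i hi => ?_⟩
  have h := hz (-i) (by simp only [mem_Icc] at hi ⊢; omega)
  change proj A (- -i) _ = 0 at h
  rwa [neg_neg] at h

theorem isNoetherianRing_of_isNoetherianRing_gradeZero [IsNoetherianRing R₀] {ε : ℤ → S}
    (hε : ∀ i, ε i ∈ A i * A (-i)) (hεl : ∀ i, ∀ x ∈ A i, ε i * x = x)
    (hεr : ∀ i, ∀ x ∈ A i, x * ε (-i) = x) : IsNoetherianRing S := by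
  refine ⟨fun I => ?_⟩
  obtain ⟨J₁, hJ₁, hJ₁I, D₁, hD₁⟩ := exists_fg_truncation_above A hε hεl I
  obtain ⟨J₂, hJ₂, hJ₂I, D₂, hD₂⟩ := exists_fg_truncation_below A hε hεl I
  set X := I.restrictScalars R₀ ⊓ supportedIn A (Icc 0 D₂)
  have hX : (Submodule.span S (X : Set S)).FG := by
    have hfg i : (gradeSubmodule A i).FG := by
      have h := hε (-i)
      rw [neg_neg] at h
      exact fg_gradeSubmodule h (hεr i)
    obtain ⟨T, hT⟩ : X.FG := (fg_supportedIn_Icc A hfg 0 D₂).of_le inf_le_right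
    exact ⟨T, by rw [← hT, Submodule.span_span_of_tower]⟩
  have hI : I ≤ J₁ ⊔ J₂ ⊔ Submodule.span S (X : Set S) := by
    intro x hxI
    obtain ⟨a, _, hx⟩ := exists_mem_supportedIn_Icc A x
    obtain ⟨z₁, hz₁, hy⟩ := hD₁ (min a (-D₁)) (min_le_right _ _) x hxI
      (supportedIn_mono (fun i hi => (min_le_left _ _).trans hi.1) hx)
    have hyI : x - z₁ ∈ I := I.sub_mem hxI (hJ₁I hz₁)
    obtain ⟨z₂, hz₂, hw⟩ := hD₂ (x - z₁) hyI (supportedIn_mono (fun i hi => hi.2) hy)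
    have hwX : x - z₁ - z₂ ∈ X := ⟨I.sub_mem hyI (hJ₂I hz₂), hw⟩
    rw [show x = z₁ + z₂ + (x - z₁ - z₂) by abel]
    exact add_mem (add_mem (Submodule.mem_sup_left (Submodule.mem_sup_left hz₁))
      (Submodule.mem_sup_left (Submodule.mem_sup_right hz₂)))
      (Submodule.mem_sup_right (Submodule.subset_span hwX))
  rw [le_antisymm hI (sup_le (sup_le hJ₁I hJ₂I) (Submodule.span_le.2 fun x hx => hx.1))]
  exact (hJ₁.sup hJ₂).sup hX

end GradedRing

/-- If `S` is an epsilon-strongly `ℤ`-graded ring whose principal component `R = S_0` is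
left noetherian, then `S` is left noetherian. -/
theorem epsilonStrongZ_left_noetherian
    {S : Type*} [Ring S] (A : ℤ → AddSubgroup S)
    (hgrading : IsZGrading A) (heps : IsEpsilonStrongZ A)
    (R : Subring S) (hR : (R : Set S) = (A 0 : Set S))
    (hRnoeth : IsNoetherianRing R) :
    IsNoetherianRing S := by
  obtain ⟨hint, hmul⟩ := hgrading
  obtain ⟨-, ε, hε⟩ := heps
  let _ : GradedRing A :=
    { hint.chooseDecomposition with
      one_mem := by rw [← SetLike.mem_coe, ← hR]; exact R.one_mem
      mul_mem := fun i j _ _ hx hy => hmul i j _ hx _ hy }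
  have : IsNoetherianRing (SetLike.GradeZero.subring A) :=
    (SetLike.coe_injective hR : R = SetLike.GradeZero.subring A) ▸ hRnoeth
  exact GradedRing.isNoetherianRing_of_isNoetherianRing_gradeZero A (fun i => (hε i).1)
    (fun i x hx => ((hε i).2 x hx).1) (fun i x hx => ((hε i).2 x hx).2)
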